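/- (Neumann series solution of the Volterra equation.) Let X, t*, V, k, C and the Volterra operator K(φ)(t) = ∫_0^t k(t,s)(φ(s)) ds be as in the Volterra iterate bound. Then for every w ∈ V, the equation v = w + K(v) has a unique solution v ∈ V, and this solution is given by the absolutely convergent series v = Σ_{n=0}^∞ K^n(w). -/

import Mathlib

open Set

noncomputable section

/-- The iterates `K^n(φ)` of the Volterra integral operator
`K(φ)(t) = ∫_0^t k(t,s)(φ(s)) ds`. -/
def volterraIter {X : Type*} [NormedAddCommGroup X] [NormedSpace ℂ X]
    (k : ℝ → ℝ → (X →L[ℂ] X)) (φ : ℝ → X) : ℕ → ℝ → X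
  | 0 => φ
  | n + 1 => fun t => ∫ s in (0:ℝ)..t, k t s (volterraIter k φ n s)

/-! The iterates obey `‖Kⁿw(t)‖ ≤ M (C t)ⁿ / n!` with `M = sup ‖w‖`, so the Neumann series
converges uniformly on `[0, t*]` and `K` may be applied term by term, which gives `v = w + K v`.
The difference `d` of two solutions satisfies `d = K d`, hence `d = Kⁿ d`, and the same bound
forces `d = 0`. -/

open MeasureTheory intervalIntegral

def volterraTriangle (T : ℝ) : Set (ℝ × ℝ) := {p | 0 ≤ p.2 ∧ p.2 ≤ p.1 ∧ p.1 ≤ T}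

section Volterra

variable {X : Type*} [NormedAddCommGroup X] [NormedSpace ℂ X] {k : ℝ → ℝ → (X →L[ℂ] X)}
  {T C : ℝ}

def volterra (k : ℝ → ℝ → (X →L[ℂ] X)) (φ : ℝ → X) (t : ℝ) : X :=
  ∫ s in (0:ℝ)..t, k t s (φ s)

theorem volterraIter_succ (φ : ℝ → X) (n : ℕ) :
    volterraIter k φ (n + 1) = volterra k (volterraIter k φ n) := rfl

theorem intervalIntegrable_volterra_integrand (hk : ContinuousOn (fun p : ℝ × ℝ => k p.1 p.2)
      (volterraTriangle T)) {φ : ℝ → X} (hφ : ContinuousOn φ (Icc 0 T)) {t : ℝ}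
    (ht : t ∈ Icc 0 T) : IntervalIntegrable (fun s => k t s (φ s)) volume 0 t := by
  refine ContinuousOn.intervalIntegrable ?_
  rw [uIcc_of_le ht.1]
  refine ContinuousOn.clm_apply ?_ (hφ.mono (Icc_subset_Icc le_rfl ht.2))
  exact hk.comp (continuousOn_const.prodMk continuousOn_id) fun s hs => ⟨hs.1, hs.2, ht.2⟩

theorem volterra_sub (hk : ContinuousOn (fun p : ℝ × ℝ => k p.1 p.2) (volterraTriangle T))
    {φ ψ : ℝ → X} (hφ : ContinuousOn φ (Icc 0 T)) (hψ : ContinuousOn ψ (Icc 0 T)) {t : ℝ}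
    (ht : t ∈ Icc 0 T) : volterra k (φ - ψ) t = volterra k φ t - volterra k ψ t := by
  simp only [volterra, Pi.sub_apply, map_sub]
  exact integral_sub (intervalIntegrable_volterra_integrand hk hφ ht)
    (intervalIntegrable_volterra_integrand hk hψ ht)

theorem continuousOn_volterra
    (hk : ContinuousOn (fun p : ℝ × ℝ => k p.1 p.2) (volterraTriangle T))
    {φ : ℝ → X} (hφ : ContinuousOn φ (Icc 0 T)) : ContinuousOn (volterra k φ) (Icc 0 T) := by
  rcases lt_or_ge T 0 with hT | hT
  · simp [Icc_eq_empty_of_lt hT]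
  -- Clamping extends `k` and `φ` continuously from the triangle to the whole plane, where the
  -- integral depends continuously on its parameter and upper limit.
  set c : ℝ → ℝ := fun t => max 0 (min t T)
  have hc : Continuous c := by fun_prop
  have hc_mem : ∀ t, c t ∈ Icc 0 T := fun t => ⟨le_max_left _ _, max_le hT (min_le_right _ _)⟩
  have hc_eq : ∀ t ∈ Icc 0 T, c t = t := fun t ht => by
    simp only [c, min_eq_left ht.2, max_eq_right ht.1]
  set κ : ℝ → ℝ → X →L[ℂ] X := fun t s => k (c t) (max 0 (min s (c t)))
  have hκ : Continuous (Function.uncurry fun t s => κ t s (φ (c s))) := by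
    have hclamp : Continuous fun p : ℝ × ℝ => (c p.1, max 0 (min p.2 (c p.1))) := by fun_prop
    refine (hk.comp_continuous hclamp fun p => ?_).clm_apply
      (hφ.comp_continuous (hc.comp continuous_snd) fun p => hc_mem _)
    exact ⟨le_max_left _ _, max_le (hc_mem _).1 (min_le_right _ _), (hc_mem _).2⟩
  refine (continuous_parametric_intervalIntegral_of_continuous hκ continuous_id).continuousOn.congr
    fun t ht => integral_congr fun s hs => ?_
  rw [uIcc_of_le ht.1] at hs
  simp only [κ, hc_eq t ht, hc_eq s ⟨hs.1, hs.2.trans ht.2⟩, min_eq_left hs.2, max_eq_right hs.1]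

theorem continuousOn_volterraIter
    (hk : ContinuousOn (fun p : ℝ × ℝ => k p.1 p.2) (volterraTriangle T))
    {φ : ℝ → X} (hφ : ContinuousOn φ (Icc 0 T)) :
    ∀ n, ContinuousOn (volterraIter k φ n) (Icc 0 T)
  | 0 => hφ
  | n + 1 => continuousOn_volterra hk (continuousOn_volterraIter hk hφ n)

theorem norm_volterra_le (hkC : ∀ t s : ℝ, 0 ≤ s → s ≤ t → t ≤ T → ‖k t s‖ ≤ C) {φ : ℝ → X}
    {B : ℝ} {n : ℕ} (hφ : ∀ s ∈ Icc 0 T, ‖φ s‖ ≤ B * ((C * s) ^ n / n.factorial)) {t : ℝ}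
    (ht : t ∈ Icc 0 T) :
    ‖volterra k φ t‖ ≤ B * ((C * t) ^ (n + 1) / (n + 1).factorial) := by
  have hpt : ∀ s ∈ Ioc 0 t, ‖k t s (φ s)‖ ≤ B * C ^ (n + 1) / n.factorial * s ^ n := by
    intro s hs
    calc ‖k t s (φ s)‖ ≤ C * (B * ((C * s) ^ n / n.factorial)) :=
          (k t s).le_of_opNorm_le_of_le (hkC t s hs.1.le hs.2 ht.2)
            (hφ s ⟨hs.1.le, hs.2.trans ht.2⟩)
      _ = B * C ^ (n + 1) / n.factorial * s ^ n := by ring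
  calc ‖volterra k φ t‖ ≤ ∫ s in (0:ℝ)..t, B * C ^ (n + 1) / n.factorial * s ^ n :=
        norm_integral_le_of_norm_le ht.1 (ae_of_all _ hpt)
          ((continuous_const.mul (continuous_pow n)).intervalIntegrable 0 t)
    _ = B * ((C * t) ^ (n + 1) / (n + 1).factorial) := by
        rw [intervalIntegral.integral_const_mul, integral_pow, Nat.factorial_succ]
        push_cast
        field_simp
        ring

theorem norm_volterraIter_le (hkC : ∀ t s : ℝ, 0 ≤ s → s ≤ t → t ≤ T → ‖k t s‖ ≤ C)
    {φ : ℝ → X} {B : ℝ} (hφ : ∀ t ∈ Icc 0 T, ‖φ t‖ ≤ B) :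
    ∀ n, ∀ t ∈ Icc 0 T, ‖volterraIter k φ n t‖ ≤ B * ((C * t) ^ n / n.factorial)
  | 0 => by simpa [volterraIter] using hφ
  | n + 1 => fun _ ht => norm_volterra_le hkC (norm_volterraIter_le hkC hφ n) ht

theorem norm_volterraIter_le_uniform (hkC : ∀ t s : ℝ, 0 ≤ s → s ≤ t → t ≤ T → ‖k t s‖ ≤ C)
    {φ : ℝ → X} {B : ℝ} (hφ : ∀ t ∈ Icc 0 T, ‖φ t‖ ≤ B) (n : ℕ) {t : ℝ} (ht : t ∈ Icc 0 T) :
    ‖volterraIter k φ n t‖ ≤ B * ((C * T) ^ n / n.factorial) := by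
  have hC : 0 ≤ C := (norm_nonneg _).trans (hkC t 0 le_rfl ht.1 ht.2)
  have hB : 0 ≤ B := (norm_nonneg _).trans (hφ t ht)
  refine (norm_volterraIter_le hkC hφ n t ht).trans ?_
  gcongr
  · exact mul_nonneg hC ht.1
  · exact ht.2

theorem volterraIter_eq_self_of_eq_volterra {d : ℝ → X}
    (hd : ∀ t ∈ Icc 0 T, d t = volterra k d t) :
    ∀ n, ∀ t ∈ Icc 0 T, volterraIter k d n t = d t
  | 0 => fun _ _ => rfl
  | n + 1 => fun t ht => by
    rw [hd t ht, volterraIter_succ]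
    refine integral_congr fun s hs => ?_
    rw [uIcc_of_le ht.1] at hs
    simp only [volterraIter_eq_self_of_eq_volterra hd n s ⟨hs.1, hs.2.trans ht.2⟩]

theorem eq_zero_of_eq_volterra (hkC : ∀ t s : ℝ, 0 ≤ s → s ≤ t → t ≤ T → ‖k t s‖ ≤ C)
    {d : ℝ → X} (hd : ContinuousOn d (Icc 0 T)) (hfix : ∀ t ∈ Icc 0 T, d t = volterra k d t) :
    ∀ t ∈ Icc 0 T, d t = 0 := by
  obtain ⟨B, hB⟩ := isCompact_Icc.exists_bound_of_continuousOn hd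
  intro t ht
  have hle : ∀ n, ‖d t‖ ≤ B * ((C * t) ^ n / n.factorial) := fun n =>
    volterraIter_eq_self_of_eq_volterra hfix n t ht ▸ norm_volterraIter_le hkC hB n t ht
  have hlim := (FloorSemiring.tendsto_pow_div_factorial_atTop (C * t)).const_mul B
  rw [mul_zero] at hlim
  exact norm_le_zero_iff.1 (ge_of_tendsto' hlim hle)

theorem hasSum_volterra [CompleteSpace X]
    (hk : ContinuousOn (fun p : ℝ × ℝ => k p.1 p.2) (volterraTriangle T))
    (hkC : ∀ t s : ℝ, 0 ≤ s → s ≤ t → t ≤ T → ‖k t s‖ ≤ C) {f : ℕ → ℝ → X}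
    (hf : ∀ n, ContinuousOn (f n) (Icc 0 T)) {u : ℕ → ℝ} (hu : Summable u)
    (hfu : ∀ n, ∀ t ∈ Icc 0 T, ‖f n t‖ ≤ u n) {t : ℝ} (ht : t ∈ Icc 0 T) :
    HasSum (fun n => volterra k (f n) t) (volterra k (fun s => ∑' n, f n s) t) := by
  have hIoc : ∀ s ∈ uIoc 0 t, s ∈ Icc 0 T := fun s hs => by
    rw [uIoc_of_le ht.1] at hs
    exact ⟨hs.1.le, hs.2.trans ht.2⟩
  refine hasSum_integral_of_dominated_convergence (fun n _ => C * u n)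
    (fun n => (intervalIntegrable_volterra_integrand hk (hf n) ht).def'.aestronglyMeasurable)
    (fun n => ae_of_all _ fun s hs => ?_) (ae_of_all _ fun _ _ => hu.mul_left C)
    intervalIntegrable_const (ae_of_all _ fun s hs => ?_)
  · have hs' := hIoc s hs
    rw [uIoc_of_le ht.1] at hs
    exact (k t s).le_of_opNorm_le_of_le (hkC t s hs.1.le hs.2 ht.2) (hfu n s hs')
  · exact ((hu.of_norm_bounded fun n => hfu n s (hIoc s hs)).hasSum).mapL (k t s)

end Volterra

theorem stmt11 (X : Type*) [NormedAddCommGroup X] [NormedSpace ℂ X] [CompleteSpace X]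
    (tstar : ℝ) (htstar : 0 < tstar) (C : ℝ)
    (k : ℝ → ℝ → (X →L[ℂ] X))
    (hk : ContinuousOn (fun p : ℝ × ℝ => k p.1 p.2)
      {p : ℝ × ℝ | 0 ≤ p.2 ∧ p.2 ≤ p.1 ∧ p.1 ≤ tstar})
    (hkC : ∀ t s : ℝ, 0 ≤ s → s ≤ t → t ≤ tstar → ‖k t s‖ ≤ C)
    (w : ℝ → X) (hw : ContinuousOn w (Set.Icc 0 tstar)) :
    ∃ v : ℝ → X,
      ContinuousOn v (Set.Icc 0 tstar) ∧
      (∀ t ∈ Set.Icc (0:ℝ) tstar, v t = w t + ∫ s in (0:ℝ)..t, k t s (v s)) ∧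
      (∀ t ∈ Set.Icc (0:ℝ) tstar, HasSum (fun n : ℕ => volterraIter k w n t) (v t)) ∧
      Summable (fun n : ℕ => ⨆ t ∈ Set.Icc (0:ℝ) tstar, ‖volterraIter k w n t‖) ∧
      (∀ v' : ℝ → X, ContinuousOn v' (Set.Icc 0 tstar) →
        (∀ t ∈ Set.Icc (0:ℝ) tstar, v' t = w t + ∫ s in (0:ℝ)..t, k t s (v' s)) →
        ∀ t ∈ Set.Icc (0:ℝ) tstar, v' t = v t) := by
  have h0 : (0:ℝ) ≤ tstar := htstar.le
  have hC : 0 ≤ C := (norm_nonneg _).trans (hkC 0 0 le_rfl le_rfl h0)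
  obtain ⟨M, hM⟩ := isCompact_Icc.exists_bound_of_continuousOn hw
  have hM0 : 0 ≤ M := (norm_nonneg _).trans (hM 0 ⟨le_rfl, h0⟩)
  set u : ℕ → ℝ := fun n => M * ((C * tstar) ^ n / n.factorial)
  have hu : Summable u := (Real.summable_pow_div_factorial _).mul_left M
  have hbound : ∀ n, ∀ t ∈ Icc 0 tstar, ‖volterraIter k w n t‖ ≤ u n :=
    fun n _ ht => norm_volterraIter_le_uniform hkC hM n ht
  have hcont := continuousOn_volterraIter hk hw
  have hsum : ∀ t ∈ Icc 0 tstar, Summable fun n => volterraIter k w n t :=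
    fun t ht => hu.of_norm_bounded fun n => hbound n t ht
  set v : ℝ → X := fun t => ∑' n, volterraIter k w n t
  have hv : ContinuousOn v (Icc 0 tstar) := continuousOn_tsum hcont hu hbound
  have hveq : ∀ t ∈ Icc 0 tstar, v t = w t + volterra k v t := fun t ht =>
    (hsum t ht).tsum_eq_zero_add.trans
      (congrArg (w t + ·) (hasSum_volterra hk hkC hcont hu hbound ht).tsum_eq)
  refine ⟨v, hv, hveq, fun t ht => (hsum t ht).hasSum, ?_, fun v' hv' hv'eq t ht => ?_⟩
  · refine hu.of_nonneg_of_le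
      (fun n => Real.iSup_nonneg fun t => Real.iSup_nonneg fun _ => norm_nonneg _) fun n => ?_
    have hu0 : 0 ≤ u n := by positivity
    exact Real.iSup_le (fun t => Real.iSup_le (hbound n t) hu0) hu0
  · refine sub_eq_zero.1 (eq_zero_of_eq_volterra hkC (hv'.sub hv) (fun r hr => ?_) t ht)
    rw [volterra_sub hk hv' hv hr, Pi.sub_apply, hv'eq r hr, hveq r hr, add_sub_add_left_eq_sub]
    rfl
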